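/- Let C be a connected subgraph of the Diestel-Leader graph Γ_{α,β} such that ℓ(q) ≤ k for all q ∈ C, where ℓ is the level function. Then for every vertex u of T_α, the set π₁⁻¹[u] ∩ C has cardinality at most β^{k−ℓ₁(u)} (and is empty if ℓ₁(u) > k). In particular, if π₁(C) is finite then C is finite. -/
import Mathlib


/-- A tree with a distinguished end, encoded by the parent map and a level function. -/
structure OrientedTree (V : Type*) where
  parent : V → V
  level : V → ℤ
  level_parent : ∀ v, level (parent v) = level v - 1

/-- Adjacency in the Diestel-Leader graph: coordinates move along tree edges oriented in
opposite directions. -/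
def DLAdj {V₁ V₂ : Type*} (T₁ : OrientedTree V₁) (T₂ : OrientedTree V₂)
    (x y : V₁ × V₂) : Prop :=
  (T₁.parent y.1 = x.1 ∧ T₂.parent x.2 = y.2) ∨
  (T₁.parent x.1 = y.1 ∧ T₂.parent y.2 = x.2)

/-- Fibers of iterates of a map with finite fibers of size `≤ β` are finite of size
`≤ β ^ m`. -/
theorem iterate_fiber_bound {V : Type*} (f : V → V) (β : ℕ) (hβ : 2 ≤ β)
    (hreg : ∀ v : V, Nat.card {w : V // f w = v} = β) :
    ∀ (m : ℕ) (t : V), {a : V | f^[m] a = t}.Finite ∧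
      {a : V | f^[m] a = t}.ncard ≤ β ^ m := by
  classical
  have hfib : ∀ v : V, {w : V | f w = v}.Finite := by
    intro v
    have : Finite {w : V // f w = v} :=
      Nat.finite_of_card_ne_zero (by rw [hreg v]; omega)
    exact Set.finite_coe_iff.mp this
  have hfibcard : ∀ v : V, {w : V | f w = v}.ncard = β := by
    intro v
    rw [← Nat.card_coe_set_eq]
    exact hreg v
  intro m
  induction m with
  | zero =>
    intro t
    have : {a : V | f^[0] a = t} = {t} := by ext a; simp
    rw [this]
    exact ⟨Set.finite_singleton t, by simp⟩
  | succ n ih =>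
    intro t
    have hset : {a : V | f^[n + 1] a = t}
        = ⋃ s ∈ {s : V | f s = t}, {a : V | f^[n] a = s} := by
      ext a
      simp only [Set.mem_setOf_eq, Set.mem_iUnion, Function.iterate_succ_apply']
      exact ⟨fun h => ⟨f^[n] a, h, rfl⟩, fun ⟨s, hs, ha⟩ => ha ▸ hs⟩
    have hfin : {a : V | f^[n + 1] a = t}.Finite := by
      rw [hset]
      exact (hfib t).biUnion fun s _ => (ih s).1
    refine ⟨hfin, ?_⟩
    -- convert to Finsets
    have hsub : hfin.toFinset ⊆ (hfib t).toFinset.biUnion fun s => if h : f s = t then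
        ((ih s).1).toFinset else ∅ := by
      intro a ha
      simp only [Set.Finite.mem_toFinset, Set.mem_setOf_eq] at ha
      rw [Function.iterate_succ_apply'] at ha
      refine Finset.mem_biUnion.2 ⟨f^[n] a, ?_, ?_⟩
      · simp [Set.Finite.mem_toFinset, ha]
      · rw [dif_pos ha]
        simp [Set.Finite.mem_toFinset]
    calc {a : V | f^[n + 1] a = t}.ncard = hfin.toFinset.card :=
            Set.ncard_eq_toFinset_card _ hfin
      _ ≤ ((hfib t).toFinset.biUnion fun s => if h : f s = t then
            ((ih s).1).toFinset else ∅).card := Finset.card_le_card hsub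
      _ ≤ (hfib t).toFinset.card * β ^ n := by
            refine Finset.card_biUnion_le_card_mul _ _ _ fun s hs => ?_
            simp only [Set.Finite.mem_toFinset, Set.mem_setOf_eq] at hs
            rw [dif_pos hs, ← Set.ncard_eq_toFinset_card _ (ih s).1]
            exact (ih s).2
      _ = β ^ (n + 1) := by
            rw [← Set.ncard_eq_toFinset_card _ (hfib t), hfibcard t]
            ring

/-- If `C` is a connected subgraph of the Diestel-Leader graph `Γ_{α,β}` (the second tree
being `(β+1)`-regular, i.e. every vertex has exactly `β` children) all of whose vertices
have level `ℓ = ℓ₁ ∘ π₁` at most `k`, then each fiber `π₁⁻¹[u] ∩ C` is finite of size at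
most `β^(k − ℓ₁ u)`, and is empty when `ℓ₁ u > k`. In particular, if `π₁(C)` is finite
then `C` is finite. -/
theorem DL_fiber_bound {V₁ V₂ : Type*}
    (T₁ : OrientedTree V₁) (T₂ : OrientedTree V₂) (β : ℕ) (hβ : 2 ≤ β)
    (hreg : ∀ v : V₂, Nat.card {w : V₂ // T₂.parent w = v} = β)
    (C : Set (V₁ × V₂)) (k : ℤ)
    (hconn : ∀ x ∈ C, ∀ y ∈ C,
      Relation.ReflTransGen (fun a b => a ∈ C ∧ b ∈ C ∧ DLAdj T₁ T₂ a b) x y)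
    (hlev : ∀ q ∈ C, T₁.level q.1 ≤ k) :
    (∀ u : V₁, k < T₁.level u → {a : V₂ | (u, a) ∈ C} = ∅) ∧
    (∀ u : V₁, {a : V₂ | (u, a) ∈ C}.Finite ∧
      Nat.card {a : V₂ // (u, a) ∈ C} ≤ β ^ (k - T₁.level u).toNat) ∧
    ((Prod.fst '' C).Finite → C.Finite) := by
  classical
  -- the "anchor" map, constant on connected components staying below level k
  set φ : V₁ × V₂ → V₂ := fun q => T₂.parent^[(k - T₁.level q.1).toNat] q.2 with hφ
  have hstep : ∀ a b : V₁ × V₂, a ∈ C → b ∈ C → DLAdj T₁ T₂ a b → φ a = φ b := by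
    intro a b ha hb hadj
    rcases hadj with ⟨h1, h2⟩ | ⟨h1, h2⟩
    · -- T₁.parent b.1 = a.1, T₂.parent a.2 = b.2 : level a.1 = level b.1 - 1
      have hl : T₁.level a.1 = T₁.level b.1 - 1 := by
        rw [← h1, T₁.level_parent]
      have hlb : T₁.level b.1 ≤ k := hlev b hb
      have hm : (k - T₁.level a.1).toNat = (k - T₁.level b.1).toNat + 1 := by omega
      simp only [hφ, hm, Function.iterate_succ_apply, h2]
    · have hl : T₁.level b.1 = T₁.level a.1 - 1 := by
        rw [← h1, T₁.level_parent]
      have hla : T₁.level a.1 ≤ k := hlev a ha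
      have hm : (k - T₁.level b.1).toNat = (k - T₁.level a.1).toNat + 1 := by omega
      simp only [hφ, hm, Function.iterate_succ_apply, h2]
  have hconst : ∀ x ∈ C, ∀ y ∈ C, φ x = φ y := by
    intro x hx y hy
    induction hconn x hx y hy with
    | refl => rfl
    | tail _ h ih => exact (ih h.1).trans (hstep _ _ h.1 h.2.1 h.2.2)
  have hiter := iterate_fiber_bound T₂.parent β hβ hreg
  have hmain : ∀ u : V₁, {a : V₂ | (u, a) ∈ C}.Finite ∧
      {a : V₂ | (u, a) ∈ C}.ncard ≤ β ^ (k - T₁.level u).toNat := by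
    intro u
    by_cases hne : {a : V₂ | (u, a) ∈ C} = ∅
    · rw [hne]; simp [Set.finite_empty]
    · obtain ⟨a₀, ha₀⟩ := Set.nonempty_iff_ne_empty.2 hne
      set m := (k - T₁.level u).toNat
      set t := φ (u, a₀)
      have hsub : {a : V₂ | (u, a) ∈ C} ⊆ {a : V₂ | T₂.parent^[m] a = t} := by
        intro a ha
        exact hconst (u, a) ha (u, a₀) ha₀
      obtain ⟨hfin, hcard⟩ := hiter m t
      exact ⟨hfin.subset hsub, le_trans (Set.ncard_le_ncard hsub hfin) hcard⟩
  refine ⟨?_, ?_, ?_⟩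
  · intro u hu
    ext a
    simp only [Set.mem_setOf_eq, Set.mem_empty_iff_false, iff_false]
    intro ha
    exact absurd (hlev (u, a) ha) (by simpa using hu.not_ge)
  · intro u
    obtain ⟨hfin, hcard⟩ := hmain u
    refine ⟨hfin, ?_⟩
    exact (Nat.card_coe_set_eq {a : V₂ | (u, a) ∈ C}).trans_le hcard
  · intro hfst
    have : C ⊆ ⋃ u ∈ Prod.fst '' C, (fun a => (u, a)) '' {a : V₂ | (u, a) ∈ C} := by
      intro q hq
      simp only [Set.mem_iUnion]
      exact ⟨q.1, ⟨q, hq, rfl⟩, q.2, hq, rfl⟩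
    exact Set.Finite.subset (hfst.biUnion fun u _ => ((hmain u).1).image _) this
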